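/- Let Q be the Minkowski quadratic form on ℝ⁴ and B its polarization. Suppose C ∈ ℝ⁴ is timelike, Q(C) > 0, and ξ ∈ ℝ⁴ is not a real scalar multiple of C. Then there exist real numbers t₁ < t₂ < t₃ such that Q(ξ + t·C)·B(C, ξ + t·C) = Q(C)²·(t − t₁)·(t − t₂)·(t − t₃) for all t ∈ ℝ; in particular the cubic polynomial t ↦ Q(ξ + t·C)·B(C, ξ + t·C) has three distinct real roots. (This is the statement that the third-order characteristic polynomial h₂(ξ) = g^{ρμ}C^α ξ_ρ ξ_μ ξ_α of the entropy equation is hyperbolic whenever the current C is timelike with respect to the metric.) -/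

import Mathlib

/-!
Along the line `ξ + t • C` the form `Q` is the quadratic `p t = Q C * t ^ 2 + 2 * B C ξ * t + Q ξ`
and `B C (ξ + t • C) = p' t / 2`, so the cubic is `p * p' / 2`. The reverse Cauchy–Schwarz
inequality for the timelike `C`, strict because `ξ` is off the line `ℝ C`, says that `p` has
positive discriminant; its two roots and the root of `p'` between them are the three roots.
-/

/-- The Minkowski quadratic form on ℝ⁴ (signature (+,-,-,-)). -/
def minkQ (ξ : Fin 4 → ℝ) : ℝ := ξ 0 ^ 2 - ξ 1 ^ 2 - ξ 2 ^ 2 - ξ 3 ^ 2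

/-- The polarization of the Minkowski quadratic form. -/
def minkB (ξ η : Fin 4 → ℝ) : ℝ := ξ 0 * η 0 - ξ 1 * η 1 - ξ 2 * η 2 - ξ 3 * η 3

lemma minkQ_smul_add_smul (ξ C : Fin 4 → ℝ) (s t : ℝ) :
    minkQ (s • ξ + t • C) = s ^ 2 * minkQ ξ + 2 * s * t * minkB C ξ + t ^ 2 * minkQ C := by
  simp only [minkQ, minkB, Pi.add_apply, Pi.smul_apply, smul_eq_mul]
  ring

lemma minkB_smul_add_smul (ξ C : Fin 4 → ℝ) (s t : ℝ) :
    minkB C (s • ξ + t • C) = s * minkB C ξ + t * minkQ C := by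
  simp only [minkQ, minkB, Pi.add_apply, Pi.smul_apply, smul_eq_mul]
  ring

lemma minkQ_add_smul (ξ C : Fin 4 → ℝ) (t : ℝ) :
    minkQ (ξ + t • C) = minkQ ξ + 2 * minkB C ξ * t + minkQ C * t ^ 2 := by
  conv_lhs => rw [← one_smul ℝ ξ, minkQ_smul_add_smul]
  ring

lemma minkB_add_smul (ξ C : Fin 4 → ℝ) (t : ℝ) :
    minkB C (ξ + t • C) = minkB C ξ + minkQ C * t := by
  conv_lhs => rw [← one_smul ℝ ξ, minkB_smul_add_smul]
  ring

lemma minkQ_neg_of_minkB_eq_zero {C η : Fin 4 → ℝ} (hC : 0 < minkQ C)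
    (horth : minkB C η = 0) (hη : η ≠ 0) : minkQ η < 0 := by
  unfold minkQ at hC ⊢
  unfold minkB at horth
  set s := η 1 ^ 2 + η 2 ^ 2 + η 3 ^ 2
  have hC0 : 0 < C 0 ^ 2 := by nlinarith [sq_nonneg (C 1), sq_nonneg (C 2), sq_nonneg (C 3)]
  -- Cauchy–Schwarz for the spatial parts, via Lagrange's identity
  have hCS : (C 0 * η 0) ^ 2 ≤ (C 1 ^ 2 + C 2 ^ 2 + C 3 ^ 2) * s := by
    rw [show C 0 * η 0 = C 1 * η 1 + C 2 * η 2 + C 3 * η 3 by linarith]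
    nlinarith [sq_nonneg (C 1 * η 2 - C 2 * η 1), sq_nonneg (C 1 * η 3 - C 3 * η 1),
      sq_nonneg (C 2 * η 3 - C 3 * η 2)]
  have hs : 0 < s := by
    by_contra! hs
    have h1 : η 1 = 0 := by nlinarith [sq_nonneg (η 1), sq_nonneg (η 2), sq_nonneg (η 3)]
    have h2 : η 2 = 0 := by nlinarith [sq_nonneg (η 1), sq_nonneg (η 2), sq_nonneg (η 3)]
    have h3 : η 3 = 0 := by nlinarith [sq_nonneg (η 1), sq_nonneg (η 2), sq_nonneg (η 3)]
    have h0 : η 0 = 0 := by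
      have : C 0 * η 0 = 0 := by simpa [h1, h2, h3] using horth
      exact (mul_eq_zero.mp this).resolve_left fun h => by simp [h] at hC0
    exact hη (funext fun i => by fin_cases i <;> assumption)
  nlinarith

lemma minkQ_mul_minkQ_lt_sq_minkB {C ξ : Fin 4 → ℝ} (hC : 0 < minkQ C)
    (hξ : ∀ c : ℝ, ξ ≠ c • C) : minkQ C * minkQ ξ < minkB C ξ ^ 2 := by
  -- `Q C` times the component of `ξ` that is Minkowski-orthogonal to `C`
  set η := minkQ C • ξ + (-minkB C ξ) • C with hη_def
  have horth : minkB C η = 0 := by rw [minkB_smul_add_smul]; ring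
  have hη : η ≠ 0 := by
    intro h
    apply hξ (minkB C ξ / minkQ C)
    have hparallel : minkQ C • ξ = minkB C ξ • C := by
      rwa [hη_def, neg_smul, add_neg_eq_zero] at h
    rw [div_eq_inv_mul, mul_smul, ← hparallel, inv_smul_smul₀ hC.ne']
  have hQη : minkQ η = minkQ C * (minkQ C * minkQ ξ - minkB C ξ ^ 2) := by
    rw [minkQ_smul_add_smul]; ring
  have hneg := minkQ_neg_of_minkB_eq_zero hC horth hη
  rw [hQη] at hneg
  exact sub_neg.mp (neg_of_mul_neg_right hneg hC.le)

lemma exists_roots_quadratic_mul_half_deriv {a b q : ℝ} (ha : 0 < a) (hdisc : a * q < b ^ 2) :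
    ∃ t₁ t₂ t₃ : ℝ, t₁ < t₂ ∧ t₂ < t₃ ∧
      ∀ t : ℝ, (q + 2 * b * t + a * t ^ 2) * (b + a * t) =
        a ^ 2 * (t - t₁) * (t - t₂) * (t - t₃) := by
  set D := √(b ^ 2 - a * q)
  have hD : 0 < D := Real.sqrt_pos.mpr (by linarith)
  have hD2 : D ^ 2 = b ^ 2 - a * q := Real.sq_sqrt (by linarith)
  refine ⟨(-b - D) / a, -b / a, (-b + D) / a, ?_, ?_, fun t => ?_⟩
  · exact div_lt_div_of_pos_right (by linarith) ha
  · exact div_lt_div_of_pos_right (by linarith) ha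
  · field_simp
    linear_combination (a * t + b) * hD2

/-- The cubic characteristic polynomial `h₂(ξ) = g^{ρμ}C^α ξ_ρ ξ_μ ξ_α` of the entropy
equation is hyperbolic in the direction of a timelike current C: along any line in the
direction C it factors with three distinct real roots. -/
theorem cubic_entropy_symbol_hyperbolic (C : Fin 4 → ℝ) (hC : 0 < minkQ C)
    (ξ : Fin 4 → ℝ) (hξ : ∀ c : ℝ, ξ ≠ c • C) :
    ∃ t₁ t₂ t₃ : ℝ, t₁ < t₂ ∧ t₂ < t₃ ∧
      ∀ t : ℝ, minkQ (ξ + t • C) * minkB C (ξ + t • C) =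
        minkQ C ^ 2 * (t - t₁) * (t - t₂) * (t - t₃) := by
  obtain ⟨t₁, t₂, t₃, h₁₂, h₂₃, hfactor⟩ :=
    exists_roots_quadratic_mul_half_deriv hC (minkQ_mul_minkQ_lt_sq_minkB hC hξ)
  refine ⟨t₁, t₂, t₃, h₁₂, h₂₃, fun t => ?_⟩
  rw [minkQ_add_smul, minkB_add_smul, hfactor]
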